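/- For the 2×2 positive definite complex matrix A₂ = [[1−a, e],[ē, 1−a]] with det(A₂) > 0, the largest eigenvalue λ of B = √A₂ · σ₁ · A₂^{-1} · σ₁ · √A₂ (where σ₁ = [[0,1],[1,0]]) satisfies λ = 1 + 2·Im(e)²/det(A₂) + √((1 + 2·Im(e)²/det(A₂))² − 1), and det(B) = 1. -/

import Mathlib

open Real
open scoped ComplexOrder

/-!
Only `√A₂ √A₂ = A₂` is needed about the square root. Then `det B = det(σ₁)² = 1`, and by
cyclicity of the trace `tr B = tr(A₂ σ₁ A₂⁻¹ σ₁) = 2 + 4 Im(e)² / det A₂ =: 2t`. The two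
eigenvalues of the Hermitian `2 × 2` matrix `B` thus have sum `2t` and product `1`, so the larger
one is `t + √(t² - 1)`.
-/

namespace Matrix.PosSemidef

/-- The positive semidefinite square root of a positive semidefinite matrix -/
noncomputable def sqrt {n 𝕜 : Type*} [Fintype n] [DecidableEq n] [RCLike 𝕜] {A : Matrix n n 𝕜}
    (hA : A.PosSemidef) : Matrix n n 𝕜 :=
  hA.1.eigenvectorUnitary.1 * Matrix.diagonal ((↑) ∘ (Real.sqrt ∘ hA.1.eigenvalues)) *
    (star hA.1.eigenvectorUnitary : Matrix n n 𝕜)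

theorem sqrt_mul_self {n 𝕜 : Type*} [Fintype n] [DecidableEq n] [RCLike 𝕜] {A : Matrix n n 𝕜}
    (hA : A.PosSemidef) : hA.sqrt * hA.sqrt = A := by
  have hU : (star hA.1.eigenvectorUnitary : Matrix n n 𝕜) * hA.1.eigenvectorUnitary.1 = 1 :=
    Unitary.coe_star_mul_self _
  have hdiag : diagonal (((↑) ∘ (Real.sqrt ∘ hA.1.eigenvalues)) : n → 𝕜) *
      diagonal ((↑) ∘ (Real.sqrt ∘ hA.1.eigenvalues)) =
        diagonal (RCLike.ofReal ∘ hA.1.eigenvalues) := by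
    rw [diagonal_mul_diagonal]
    congr 1
    funext i
    simp only [Function.comp_apply]
    rw [← RCLike.ofReal_mul, Real.mul_self_sqrt (hA.eigenvalues_nonneg i)]
  conv_rhs => rw [hA.1.spectral_theorem, Unitary.conjStarAlgAut_apply, ← hdiag]
  simp only [sqrt, mul_assoc]
  rw [← mul_assoc (star hA.1.eigenvectorUnitary : Matrix n n 𝕜), hU, one_mul]

end Matrix.PosSemidef

namespace Matrix

section Conjugation

variable {n R : Type*} [Fintype n] [CommRing R] {S A P M : Matrix n n R}

theorem trace_mul_mul_mul_mul_of_mul_self (hS : S * S = A) :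
    (S * P * M * P * S).trace = (A * P * M * P).trace := by
  rw [trace_mul_comm, ← hS]
  simp only [mul_assoc]

variable [DecidableEq n]

theorem det_mul_mul_inv_mul_mul_of_mul_self (hS : S * S = A) (hA : IsUnit A.det) :
    (S * P * A⁻¹ * P * S).det = P.det ^ 2 := by
  have hSdet : S.det * S.det = A.det := by rw [← det_mul, hS]
  simp only [det_mul, det_nonsing_inv]
  linear_combination P.det ^ 2 * Ring.inverse A.det * hSdet +
    P.det ^ 2 * Ring.mul_inverse_cancel _ hA

end Conjugation

theorem det_hermitian_fin_two (p : ℝ) (e : ℂ) :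
    (!![(p : ℂ), e; star e, p]).det = ((p ^ 2 - Complex.normSq e : ℝ) : ℂ) := by
  rw [det_fin_two_of, Complex.star_def, Complex.mul_conj]
  push_cast
  ring

theorem trace_hermitian_fin_two_mul_swap_mul_inv_mul_swap (p : ℝ) (e : ℂ)
    (hD : p ^ 2 - Complex.normSq e ≠ 0) :
    (!![(p : ℂ), e; star e, p] * !![(0 : ℂ), 1; 1, 0] * (!![(p : ℂ), e; star e, p])⁻¹ *
        !![(0 : ℂ), 1; 1, 0]).trace =
      ((2 + 4 * e.im ^ 2 / (p ^ 2 - Complex.normSq e) : ℝ) : ℂ) := by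
  rw [inv_def, Ring.inverse_eq_inv', adjugate_fin_two_of, det_hermitian_fin_two]
  have hD' : (p : ℂ) ^ 2 - e * starRingEnd ℂ e ≠ 0 := by
    rw [Complex.mul_conj]; exact_mod_cast hD
  simp [trace_fin_two_of]
  rw [Complex.im_eq_sub_conj, ← Complex.mul_conj]
  field_simp
  linear_combination -4 * (e - starRingEnd ℂ e) ^ 2 * Complex.I_sq

end Matrix

theorem max_eq_add_sqrt_of_add_eq_of_mul_eq {x y t p : ℝ} (hsum : x + y = 2 * t)
    (hprod : x * y = p) : max x y = t + √(t ^ 2 - p) := by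
  have hq : (max x y - t) ^ 2 = t ^ 2 - p := by
    rcases max_choice x y with h | h <;> rw [h]
    · linear_combination x * hsum - hprod
    · linear_combination y * hsum - hprod
  have ht : t ≤ max x y := by
    rcases le_total x y with h | h <;> simp [h] <;> linarith
  rw [← hq, Real.sqrt_sq (by linarith)]
  ring

theorem Matrix.IsHermitian.isGreatest_eigenvalues_fin_two {𝕜 : Type*} [RCLike 𝕜]
    {B : Matrix (Fin 2) (Fin 2) 𝕜} (hB : B.IsHermitian) {t p : ℝ}
    (htr : B.trace = (2 * t : ℝ)) (hdet : B.det = (p : ℝ)) :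
    IsGreatest (Set.range hB.eigenvalues) (t + √(t ^ 2 - p)) := by
  have hsum : hB.eigenvalues 0 + hB.eigenvalues 1 = 2 * t := by
    have := hB.trace_eq_sum_eigenvalues
    rw [htr, Fin.sum_univ_two] at this
    exact_mod_cast this.symm
  have hprod : hB.eigenvalues 0 * hB.eigenvalues 1 = p := by
    have := hB.det_eq_prod_eigenvalues
    rw [hdet, Fin.prod_univ_two] at this
    exact_mod_cast this.symm
  have hrange : Set.range hB.eigenvalues = {hB.eigenvalues 0, hB.eigenvalues 1} := by
    ext; simp [Fin.exists_fin_two, eq_comm]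
  rw [← max_eq_add_sqrt_of_add_eq_of_mul_eq hsum hprod, hrange]
  exact isGreatest_pair

theorem stmt_18_general (a : ℝ) (e : ℂ)
    (hA : (!![(1 - a : ℂ), e; star e, 1 - a]).PosDef)
    (hB : (hA.posSemidef.sqrt * !![(0 : ℂ), 1; 1, 0] * (!![(1 - a : ℂ), e; star e, 1 - a])⁻¹ *
            !![(0 : ℂ), 1; 1, 0] * hA.posSemidef.sqrt).IsHermitian) :
    let D : ℝ := ((!![(1 - a : ℂ), e; star e, 1 - a]).det).re
    let lam : ℝ := 1 + 2 * e.im ^ 2 / D + Real.sqrt ((1 + 2 * e.im ^ 2 / D) ^ 2 - 1)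
    (hA.posSemidef.sqrt * !![(0 : ℂ), 1; 1, 0] * (!![(1 - a : ℂ), e; star e, 1 - a])⁻¹ *
          !![(0 : ℂ), 1; 1, 0] * hA.posSemidef.sqrt).det = 1 ∧
      (∃ i, hB.eigenvalues i = lam) ∧ ∀ i, hB.eigenvalues i ≤ lam := by
  intro D lam
  have hS := hA.posSemidef.sqrt_mul_self
  obtain ⟨hD, hDim⟩ := Complex.pos_iff.1 hA.det_pos
  have hDA : (!![(1 - a : ℂ), e; star e, 1 - a]).det = D := Complex.ext rfl hDim.symm
  have hDnormSq : D = (1 - a) ^ 2 - Complex.normSq e := by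
    have := Matrix.det_hermitian_fin_two (1 - a) e
    push_cast at this
    exact_mod_cast hDA.symm.trans this
  have hdet : (hA.posSemidef.sqrt * !![(0 : ℂ), 1; 1, 0] * (!![(1 - a : ℂ), e; star e, 1 - a])⁻¹ *
      !![(0 : ℂ), 1; 1, 0] * hA.posSemidef.sqrt).det = (1 : ℝ) := by
    have hunit : IsUnit (!![(1 - a : ℂ), e; star e, 1 - a]).det := by
      rw [hDA, isUnit_iff_ne_zero]
      exact Complex.ofReal_ne_zero.2 hD.ne'
    rw [Matrix.det_mul_mul_inv_mul_mul_of_mul_self hS hunit]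
    simp [Matrix.det_fin_two_of]
  have htr : (hA.posSemidef.sqrt * !![(0 : ℂ), 1; 1, 0] * (!![(1 - a : ℂ), e; star e, 1 - a])⁻¹ *
      !![(0 : ℂ), 1; 1, 0] * hA.posSemidef.sqrt).trace = (2 * (1 + 2 * e.im ^ 2 / D) : ℝ) := by
    have := Matrix.trace_hermitian_fin_two_mul_swap_mul_inv_mul_swap (1 - a) e
      (hDnormSq ▸ hD.ne')
    push_cast at this
    rw [Matrix.trace_mul_mul_mul_mul_of_mul_self hS, this, hDnormSq]
    push_cast
    ring
  have hlam := hB.isGreatest_eigenvalues_fin_two htr hdet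
  exact ⟨by exact_mod_cast hdet, hlam.1, fun i ↦ hlam.2 ⟨i, rfl⟩⟩

/-- For `A₂ = [[1-a, e],[ē, 1-a]]` positive definite (`a ∈ [0,1)`, `|e| < 1-a`) and
`B = √A₂ σ₁ A₂⁻¹ σ₁ √A₂` with `σ₁ = [[0,1],[1,0]]`, we have `det B = 1` and the largest
eigenvalue of `B` equals `1 + 2 Im(e)²/det(A₂) + √((1 + 2 Im(e)²/det(A₂))² - 1)`. -/
theorem stmt_18 (a : ℝ) (ha : a ∈ Set.Ico (0 : ℝ) 1) (e : ℂ) (he : ‖e‖ < 1 - a)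
    (hA : (!![(1 - a : ℂ), e; star e, 1 - a]).PosDef)
    (hB : (hA.posSemidef.sqrt * !![(0 : ℂ), 1; 1, 0] * (!![(1 - a : ℂ), e; star e, 1 - a])⁻¹ *
            !![(0 : ℂ), 1; 1, 0] * hA.posSemidef.sqrt).IsHermitian) :
    let D : ℝ := ((!![(1 - a : ℂ), e; star e, 1 - a]).det).re
    let lam : ℝ := 1 + 2 * e.im ^ 2 / D + Real.sqrt ((1 + 2 * e.im ^ 2 / D) ^ 2 - 1)
    (hA.posSemidef.sqrt * !![(0 : ℂ), 1; 1, 0] * (!![(1 - a : ℂ), e; star e, 1 - a])⁻¹ *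
          !![(0 : ℂ), 1; 1, 0] * hA.posSemidef.sqrt).det = 1 ∧
      (∃ i, hB.eigenvalues i = lam) ∧ ∀ i, hB.eigenvalues i ≤ lam :=
  stmt_18_general a e hA hB
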